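/- If a point (s,t) ∈ [-1/2,1/2] × [-1/2,1/2] lies in the hexagon snowflake fractal S_F, then there exist balanced ternary representations a of s and b of t such that for every index j ≥ 1, either a_j · b_j = 0 or a_j + b_j = 0. -/

import Mathlib

open scoped Pointwise

/-- `a : ℕ+ → ℤ` is a balanced ternary representation of `t ∈ [-1/2,1/2]`:
all digits are in `{-1,0,1}` and `t = ∑_{j=1}^∞ a_j 3^{-j}`. -/
def IsBalTernRep (a : ℕ+ → ℤ) (t : ℝ) : Prop :=
  (∀ j : ℕ+, a j = -1 ∨ a j = 0 ∨ a j = 1) ∧ t = ∑' j : ℕ+, (a j : ℝ) / 3 ^ (j : ℕ)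

/-- The initial hexagon `H₀`: the square `[-1/2,1/2]²` with the two corner
squares `(1/6,1/2] × (1/6,1/2]` and `[-1/2,-1/6) × [-1/2,-1/6)` removed. -/
def H0 : Set (ℝ × ℝ) :=
  {p | |p.1| ≤ 1 / 2 ∧ |p.2| ≤ 1 / 2 ∧
    ¬(p.1 > 1 / 6 ∧ p.2 > 1 / 6) ∧ ¬(p.1 < -(1 / 6) ∧ p.2 < -(1 / 6))}

/-- The seven translation vectors used to build the hexagon snowflake fractal. -/
def V : Set (ℝ × ℝ) :=
  {(0, 0), (1 / 3, 0), (0, 1 / 3), (1 / 3, -(1 / 3)), (-(1 / 3), 0), (0, -(1 / 3)),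
    (-(1 / 3), 1 / 3)}

/-- The decreasing sequence of sets whose intersection is the hexagon snowflake fractal. -/
noncomputable def G : ℕ → Set (ℝ × ℝ)
  | 0 => H0
  | n + 1 => ⋃ v ∈ V, (fun p => p + v) '' ((1 / 3 : ℝ) • G n)

/-- The hexagon snowflake fractal. -/
noncomputable def SF : Set (ℝ × ℝ) := ⋂ n, G n

lemma hexsub : ∀ v ∈ V, ∀ q ∈ H0, (1 / 3 : ℝ) • q + v ∈ H0 := by
  intro v hv q hq
  obtain ⟨h1, h2, h3, h4⟩ := hq
  rw [abs_le] at h1 h2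
  simp only [V, Set.mem_insert_iff, Set.mem_singleton_iff] at hv
  rcases hv with rfl|rfl|rfl|rfl|rfl|rfl|rfl <;>
    refine ⟨abs_le.2 ⟨by simp; linarith, by simp; linarith⟩,
      abs_le.2 ⟨by simp; linarith, by simp; linarith⟩,
      fun hc => by simp at hc; obtain ⟨c1,c2⟩ := hc; linarith,
      fun hc => by simp at hc; obtain ⟨c1,c2⟩ := hc; linarith⟩

lemma Gsucc (n : ℕ) : G (n+1) ⊆ G n := by
  induction n with
  | zero =>
    intro p hp
    simp only [G, Set.mem_iUnion, Set.mem_image, Set.mem_smul_set] at hp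
    obtain ⟨v, hv, _, ⟨q, hq, rfl⟩, rfl⟩ := hp
    exact hexsub v hv q hq
  | succ n ih =>
    show (⋃ v ∈ V, (fun p => p + v) '' ((1 / 3 : ℝ) • G (n+1))) ⊆
      ⋃ v ∈ V, (fun p => p + v) '' ((1 / 3 : ℝ) • G n)
    exact Set.iUnion₂_mono fun v hv => Set.image_mono (Set.smul_set_mono ih)

lemma Ganti : Antitone G := antitone_nat_of_succ_le Gsucc

lemma Vfin : V.Finite := by
  unfold V
  exact Set.toFinite _

lemma step' {p : ℝ × ℝ} (hp : p ∈ SF) :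
    ∃ v ∈ V, (3 : ℝ) • (p - v) ∈ SF := by
  have hmem : ∀ n, p ∈ G (n+1) := fun n => Set.mem_iInter.1 hp (n+1)
  have hch : ∀ n : ℕ, ∃ v ∈ V, p - v ∈ (1/3 : ℝ) • G n := by
    intro n
    have := hmem n
    simp only [G, Set.mem_iUnion, Set.mem_image] at this
    obtain ⟨v, hv, q, hq, hpq⟩ := this
    exact ⟨v, hv, by rw [← hpq]; simpa using hq⟩
  choose f hf hf2 using hch
  have : ∃ v ∈ V, {n | f n = v}.Infinite := by
    by_contra hc
    push_neg at hc
    have : (Set.univ : Set ℕ).Finite := by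
      have : (Set.univ : Set ℕ) ⊆ ⋃ v ∈ V, {n | f n = v} := by
        intro n _; simp only [Set.mem_iUnion]; exact ⟨f n, hf n, rfl⟩
      exact Set.Finite.subset (Set.Finite.biUnion Vfin (fun v hv => hc v hv)) this
    exact Set.infinite_univ this
  obtain ⟨v, hv, hinf⟩ := this
  refine ⟨v, hv, Set.mem_iInter.2 fun m => ?_⟩
  obtain ⟨n, hn, hnm⟩ := hinf.exists_gt m
  have : p - v ∈ (1/3 : ℝ) • G m := by
    rw [← hn] at *
    exact Set.smul_set_mono (Ganti hnm.le) (hf2 n)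
  rw [Set.mem_smul_set] at this
  obtain ⟨q, hq, hqe⟩ := this
  have : (3:ℝ) • (p - v) = q := by rw [← hqe, smul_smul]; norm_num
  rwa [this]

lemma step2 {p : ℝ × ℝ} (hp : p ∈ SF) :
    ∃ (q : ℝ × ℝ) (da db : ℤ), q ∈ SF ∧ (da = -1 ∨ da = 0 ∨ da = 1) ∧
      (db = -1 ∨ db = 0 ∨ db = 1) ∧ (da * db = 0 ∨ da + db = 0) ∧
      p.1 = (da : ℝ) / 3 + q.1 / 3 ∧ p.2 = (db : ℝ) / 3 + q.2 / 3 := by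
  obtain ⟨v, hv, hq⟩ := step' hp
  have e1 : ((3 : ℝ) • (p - v)).1 = 3 * (p.1 - v.1) := rfl
  have e2 : ((3 : ℝ) • (p - v)).2 = 3 * (p.2 - v.2) := rfl
  simp only [V, Set.mem_insert_iff, Set.mem_singleton_iff] at hv
  rcases hv with rfl|rfl|rfl|rfl|rfl|rfl|rfl
  · exact ⟨_, 0, 0, hq, by norm_num, by norm_num, by norm_num,
      by rw [e1]; norm_num, by rw [e2]; norm_num⟩
  · exact ⟨_, 1, 0, hq, by norm_num, by norm_num, by norm_num,
      by rw [e1]; push_cast; ring_nf, by rw [e2]; norm_num⟩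
  · exact ⟨_, 0, 1, hq, by norm_num, by norm_num, by norm_num,
      by rw [e1]; norm_num, by rw [e2]; push_cast; ring_nf⟩
  · exact ⟨_, 1, -1, hq, by norm_num, by norm_num, by norm_num,
      by rw [e1]; push_cast; ring_nf, by rw [e2]; push_cast; ring_nf⟩
  · exact ⟨_, -1, 0, hq, by norm_num, by norm_num, by norm_num,
      by rw [e1]; push_cast; ring_nf, by rw [e2]; norm_num⟩
  · exact ⟨_, 0, -1, hq, by norm_num, by norm_num, by norm_num,
      by rw [e1]; norm_num, by rw [e2]; push_cast; ring_nf⟩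
  · exact ⟨_, -1, 1, hq, by norm_num, by norm_num, by norm_num,
      by rw [e1]; push_cast; ring_nf, by rw [e2]; push_cast; ring_nf⟩

lemma SF_sub_H0 : SF ⊆ H0 := fun p hp => Set.mem_iInter.1 hp 0

/-- key convergence lemma (coordinate-wise) -/
lemma rep_of_seq (x : ℝ) (d : ℕ → ℤ) (r : ℕ → ℝ)
    (hd : ∀ k, |(d k : ℝ)| ≤ 1) (hr : ∀ n, |r n| ≤ 1 / 2)
    (hmain : ∀ n, x = ∑ k ∈ Finset.range n, (d k : ℝ) / 3 ^ (k + 1) + r n / 3 ^ n) :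
    HasSum (fun j : ℕ+ => ((d ((j : ℕ) - 1) : ℤ) : ℝ) / 3 ^ (j : ℕ)) x := by
  set c : ℕ → ℝ := fun k => (d k : ℝ) / 3 ^ (k + 1) with hc
  have hsum : Summable c := by
    apply Summable.of_norm_bounded
      (summable_geometric_of_lt_one (by norm_num : (0:ℝ) ≤ 1 / 3) (by norm_num))
    intro k
    have h3 : (0:ℝ) < 3 ^ (k+1) := by positivity
    rw [hc]
    simp only [Real.norm_eq_abs, abs_div, abs_pow]
    rw [abs_of_nonneg (by norm_num : (0:ℝ) ≤ 3)]
    rw [div_le_iff₀ h3]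
    have : ((1:ℝ)/3) ^ k * 3 ^ (k+1) = 3 := by
      rw [pow_succ]
      field_simp
      rw [← mul_pow]; norm_num
    rw [this]
    calc |(d k : ℝ)| ≤ 1 := hd k
      _ ≤ 3 := by norm_num
  have htend : Filter.Tendsto (fun n => ∑ k ∈ Finset.range n, c k) Filter.atTop (nhds x) := by
    have heq : ∀ n, ∑ k ∈ Finset.range n, c k = x - r n / 3 ^ n := by
      intro n; rw [hmain n]; ring
    simp only [heq]
    have h0 : Filter.Tendsto (fun n : ℕ => r n / 3 ^ n) Filter.atTop (nhds 0) := by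
      have hb : Filter.Tendsto (fun n : ℕ => (1/2 : ℝ) * (1/3:ℝ)^n) Filter.atTop (nhds 0) := by
        have := (tendsto_pow_atTop_nhds_zero_of_lt_one (by norm_num : (0:ℝ) ≤ 1/3)
          (by norm_num)).const_mul (1/2:ℝ)
        simpa using this
      apply squeeze_zero_norm (fun n => ?_) hb
      simp only [Real.norm_eq_abs, abs_div, abs_pow]
      rw [abs_of_nonneg (by norm_num : (0:ℝ) ≤ 3)]
      rw [div_le_iff₀ (by positivity)]
      have h2 : (1/2 : ℝ) * (1/3)^n * 3^n = 1/2 := by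
        rw [mul_assoc, ← mul_pow]; norm_num
      calc |r n| ≤ 1/2 := hr n
        _ = 1/2 * (1/3)^n * 3^n := h2.symm
    have := Filter.Tendsto.sub (tendsto_const_nhds (x := x) (f := Filter.atTop)) h0
    simpa using this
  have hx : HasSum c x := (Summable.hasSum_iff_tendsto_nat hsum).2 htend
  have : (fun j : ℕ+ => ((d ((j : ℕ) - 1) : ℤ) : ℝ) / 3 ^ (j : ℕ)) ∘
      (Equiv.pnatEquivNat.symm) = c := by
    funext k
    have hk : ((Equiv.pnatEquivNat.symm k : ℕ+) : ℕ) = k + 1 := rfl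
    simp only [Function.comp_apply, hk, Nat.add_sub_cancel, hc]
  exact (Equiv.hasSum_iff Equiv.pnatEquivNat.symm).1 (this ▸ hx)

theorem stmt11 (s t : ℝ) (hs : s ∈ Set.Icc (-(1 / 2) : ℝ) (1 / 2))
    (ht : t ∈ Set.Icc (-(1 / 2) : ℝ) (1 / 2)) (h : (s, t) ∈ SF) :
    ∃ a b : ℕ+ → ℤ, IsBalTernRep a s ∧ IsBalTernRep b t ∧
      ∀ j : ℕ+, a j * b j = 0 ∨ a j + b j = 0 := by
  have key : ∀ p : {x : ℝ × ℝ // x ∈ SF}, ∃ (q : {x : ℝ × ℝ // x ∈ SF}) (da db : ℤ),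
      (da = -1 ∨ da = 0 ∨ da = 1) ∧ (db = -1 ∨ db = 0 ∨ db = 1) ∧
      (da * db = 0 ∨ da + db = 0) ∧
      (p : ℝ × ℝ).1 = (da : ℝ) / 3 + (q : ℝ × ℝ).1 / 3 ∧
      (p : ℝ × ℝ).2 = (db : ℝ) / 3 + (q : ℝ × ℝ).2 / 3 := by
    intro p
    obtain ⟨q, da, db, hq, h1, h2, h3, h4, h5⟩ := step2 p.2
    exact ⟨⟨q, hq⟩, da, db, h1, h2, h3, h4, h5⟩
  choose next da db hda hdb hsum h1 h2 using key
  set F : ℕ → {x : ℝ × ℝ // x ∈ SF} := fun n => next^[n] ⟨(s, t), h⟩ with hF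
  have hFsucc : ∀ n, F (n + 1) = next (F n) := fun n => Function.iterate_succ_apply' _ _ _
  -- partial sum identities
  have main1 : ∀ n, s = ∑ k ∈ Finset.range n, ((da (F k) : ℝ)) / 3 ^ (k + 1) +
      ((F n : ℝ × ℝ)).1 / 3 ^ n := by
    intro n
    induction n with
    | zero => simp [hF]
    | succ n ih =>
      rw [Finset.sum_range_succ, hFsucc n]
      have := h1 (F n)
      rw [this] at ih
      rw [ih]
      have h3 : (3:ℝ) ^ (n+1) = 3 ^ n * 3 := pow_succ 3 n
      field_simp
      ring
  have main2 : ∀ n, t = ∑ k ∈ Finset.range n, ((db (F k) : ℝ)) / 3 ^ (k + 1) +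
      ((F n : ℝ × ℝ)).2 / 3 ^ n := by
    intro n
    induction n with
    | zero => simp [hF]
    | succ n ih =>
      rw [Finset.sum_range_succ, hFsucc n]
      have := h2 (F n)
      rw [this] at ih
      rw [ih]
      field_simp
      ring
  have hbound1 : ∀ n, |((F n : ℝ × ℝ)).1| ≤ 1 / 2 := fun n => (SF_sub_H0 (F n).2).1
  have hbound2 : ∀ n, |((F n : ℝ × ℝ)).2| ≤ 1 / 2 := fun n => (SF_sub_H0 (F n).2).2.1
  have habs : ∀ (z : ℤ), (z = -1 ∨ z = 0 ∨ z = 1) → |(z : ℝ)| ≤ 1 := by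
    rintro z (rfl|rfl|rfl) <;> norm_num
  have hs1 := rep_of_seq s (fun k => da (F k)) (fun n => ((F n : ℝ × ℝ)).1)
    (fun k => habs _ (hda (F k))) hbound1 main1
  have hs2 := rep_of_seq t (fun k => db (F k)) (fun n => ((F n : ℝ × ℝ)).2)
    (fun k => habs _ (hdb (F k))) hbound2 main2
  refine ⟨fun j => da (F ((j : ℕ) - 1)), fun j => db (F ((j : ℕ) - 1)),
    ⟨fun j => hda _, hs1.tsum_eq.symm⟩, ⟨fun j => hdb _, hs2.tsum_eq.symm⟩,
    fun j => hsum _⟩
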